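/- arXiv:1602.01883 — 3 statements merged into one kernel-verified Lean document; each statement's English description precedes it below -/
import Mathlib

section
/- For a bounded-time STL formula, robust satisfaction is sound with respect to Boolean satisfaction: if ρ^φ(ξ,t) > 0 then (ξ,t) ⊨ φ, where satisfaction and robustness are defined by the standard recursive semantics over atomic predicates, negated predicates, conjunction, and bounded G, F, U operators over finite (integer) time intervals. -/
/-- Bounded-time STL formulas over signals `ℕ → Fin n → ℝ`. -/
inductive STL (n : ℕ) where
  | atom  (μ : (Fin n → ℝ) → ℝ)
  | natom (μ : (Fin n → ℝ) → ℝ)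
  | and_  (φ ψ : STL n)
  | G (a b : ℕ) (hab : a ≤ b) (φ : STL n)
  | F (a b : ℕ) (hab : a ≤ b) (φ : STL n)
  | U (a b : ℕ) (hab : a ≤ b) (φ ψ : STL n)

/-- Boolean satisfaction semantics. -/
def STL.sat {n : ℕ} (ξ : ℕ → Fin n → ℝ) : STL n → ℕ → Prop
  | .atom μ, t => 0 < μ (ξ t)
  | .natom μ, t => ¬ (0 < μ (ξ t))
  | .and_ φ ψ, t => φ.sat ξ t ∧ ψ.sat ξ t
  | .G a b _ φ, t => ∀ t' ∈ Finset.Icc (t + a) (t + b), φ.sat ξ t'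
  | .F a b _ φ, t => ∃ t' ∈ Finset.Icc (t + a) (t + b), φ.sat ξ t'
  | .U a b _ φ ψ, t => ∃ t' ∈ Finset.Icc (t + a) (t + b),
      ψ.sat ξ t' ∧ ∀ t'' ∈ Finset.Icc t t', φ.sat ξ t''

/-- Quantitative (robust) semantics. -/
noncomputable def STL.rho {n : ℕ} (ξ : ℕ → Fin n → ℝ) : STL n → ℕ → ℝ
  | .atom μ, t => μ (ξ t)
  | .natom μ, t => - μ (ξ t)
  | .and_ φ ψ, t => min (φ.rho ξ t) (ψ.rho ξ t)
  | .G a b hab φ, t =>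
      (Finset.Icc (t + a) (t + b)).inf' (Finset.nonempty_Icc.mpr (by omega))
        (fun t' => φ.rho ξ t')
  | .F a b hab φ, t =>
      (Finset.Icc (t + a) (t + b)).sup' (Finset.nonempty_Icc.mpr (by omega))
        (fun t' => φ.rho ξ t')
  | .U a b hab φ ψ, t =>
      (Finset.Icc (t + a) (t + b)).sup' (Finset.nonempty_Icc.mpr (by omega))
        (fun t' => min (ψ.rho ξ t')
          ((Finset.Icc t (max t t')).inf' (Finset.nonempty_Icc.mpr (le_max_left t t'))
            (fun t'' => φ.rho ξ t'')))

/-- Soundness of robust satisfaction: positive robustness implies Boolean satisfaction. -/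
theorem robustness_sound {n : ℕ} (φ : STL n) (ξ : ℕ → Fin n → ℝ) (t : ℕ)
    (h : 0 < φ.rho ξ t) : φ.sat ξ t := by
  induction φ generalizing t with
  | atom μ => exact h
  | natom μ => simp only [STL.rho] at h; simp only [STL.sat]; linarith
  | and_ φ ψ ihφ ihψ =>
      simp only [STL.rho, lt_min_iff] at h
      exact ⟨ihφ t h.1, ihψ t h.2⟩
  | G a b hab φ ih =>
      simp only [STL.rho, Finset.lt_inf'_iff] at h
      exact fun t' ht' => ih t' (h t' ht')
  | F a b hab φ ih =>
      simp only [STL.rho, Finset.lt_sup'_iff] at h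
      obtain ⟨t', ht', hpos⟩ := h
      exact ⟨t', ht', ih t' hpos⟩
  | U a b hab φ ψ ihφ ihψ =>
      simp only [STL.rho, Finset.lt_sup'_iff, lt_min_iff, Finset.lt_inf'_iff] at h
      obtain ⟨t', ht', hψ, hφ⟩ := h
      refine ⟨t', ht', ihψ t' hψ, fun t'' ht'' => ihφ t'' (hφ t'' ?_)⟩
      simp only [Finset.mem_Icc] at ht'' ⊢
      have := Finset.mem_Icc.mp ht'
      omega
end

section
/- Robust satisfaction is also sound for violation: for a bounded-time STL formula φ, if ρ^φ(ξ,t) < 0 then (ξ,t) ⊭ φ. -/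
lemma sat_imp_rho_nonneg {n : ℕ} (φ : STL n) (ξ : ℕ → Fin n → ℝ) :
    ∀ t, φ.sat ξ t → 0 ≤ φ.rho ξ t := by
  induction φ with
  | atom μ => intro t h; exact le_of_lt h
  | natom μ => intro t h; simp [STL.rho]; linarith [not_lt.mp h]
  | and_ φ ψ ihφ ihψ =>
    intro t h
    exact le_min (ihφ t h.1) (ihψ t h.2)
  | G a b hab φ ih =>
    intro t h
    exact Finset.le_inf' _ _ (fun t' ht' => ih t' (h t' ht'))
  | F a b hab φ ih =>
    intro t h
    obtain ⟨t', ht', hs⟩ := h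
    exact le_trans (ih t' hs) (Finset.le_sup' _ ht')
  | U a b hab φ ψ ihφ ihψ =>
    intro t h
    obtain ⟨t', ht', hψ, hφ⟩ := h
    refine le_trans ?_ (Finset.le_sup' _ ht')
    refine le_min (ihψ t' hψ) (Finset.le_inf' _ _ (fun t'' ht'' => ?_))
    apply ihφ
    apply hφ
    have : max t t' = t' := max_eq_right (by
      simp only [Finset.mem_Icc] at ht'; omega)
    rwa [this] at ht''

/-- Soundness for violation: negative robustness implies non-satisfaction. -/
theorem robustness_sound_violation {n : ℕ} (φ : STL n) (ξ : ℕ → Fin n → ℝ) (t : ℕ)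
    (h : φ.rho ξ t < 0) : ¬ φ.sat ξ t := by
  intro hs
  exact absurd h (not_lt.mpr (sat_imp_rho_nonneg φ ξ t hs))
end

section
/- The bound of an STL formula bounds its horizon of dependence: for a bounded-time STL formula φ with bound N (the maximum over sums of nested upper interval endpoints), if two discrete-time signals ξ and ξ' agree on all times in [t, t+N], then (ξ,t) ⊨ φ if and only if (ξ',t) ⊨ φ. -/
/-- The bound `N(φ)`: the maximum over sums of nested upper interval endpoints. -/
def STL.bound {n : ℕ} : STL n → ℕ
  | .atom _ => 0
  | .natom _ => 0
  | .and_ φ ψ => max φ.bound ψ.bound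
  | .G _ b _ φ => b + φ.bound
  | .F _ b _ φ => b + φ.bound
  | .U _ b _ φ ψ => b + max φ.bound ψ.bound

/-- The bound of a formula bounds its horizon of dependence: if two signals
agree on `[t, t + N(φ)]`, then `φ` is satisfied at `t` on one iff on the other. -/
theorem bound_horizon {n : ℕ} (φ : STL n) (ξ ξ' : ℕ → Fin n → ℝ) (t : ℕ)
    (hagree : ∀ t' : ℕ, t ≤ t' → t' ≤ t + φ.bound → ξ t' = ξ' t') :
    (φ.sat ξ t ↔ φ.sat ξ' t) := by
  induction φ generalizing t with
  | atom μ => simp [STL.sat, hagree t le_rfl (by simp [STL.bound])]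
  | natom μ => simp [STL.sat, hagree t le_rfl (by simp [STL.bound])]
  | and_ φ ψ ihφ ihψ =>
    simp only [STL.sat]
    constructor <;> rintro ⟨h1, h2⟩ <;> refine ⟨?_, ?_⟩
    · exact (ihφ t (fun s hs hs' => hagree s hs (by simp [STL.bound] at *; omega))).mp h1
    · exact (ihψ t (fun s hs hs' => hagree s hs (by simp [STL.bound] at *; omega))).mp h2
    · exact (ihφ t (fun s hs hs' => hagree s hs (by simp [STL.bound] at *; omega))).mpr h1
    · exact (ihψ t (fun s hs hs' => hagree s hs (by simp [STL.bound] at *; omega))).mpr h2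
  | G a b hab φ ih =>
    simp only [STL.sat, Finset.mem_Icc]
    constructor <;> intro h t' ht' <;>
      [exact (ih t' (fun s hs hs' => hagree s (by omega) (by simp [STL.bound] at *; omega))).mp (h t' ht');
       exact (ih t' (fun s hs hs' => hagree s (by omega) (by simp [STL.bound] at *; omega))).mpr (h t' ht')]
  | F a b hab φ ih =>
    simp only [STL.sat, Finset.mem_Icc]
    constructor <;> rintro ⟨t', ht', h⟩ <;> refine ⟨t', ht', ?_⟩ <;>
      [exact (ih t' (fun s hs hs' => hagree s (by omega) (by simp [STL.bound] at *; omega))).mp h;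
       exact (ih t' (fun s hs hs' => hagree s (by omega) (by simp [STL.bound] at *; omega))).mpr h]
  | U a b hab φ ψ ihφ ihψ =>
    simp only [STL.sat, Finset.mem_Icc]
    constructor <;> rintro ⟨t', ht', hψ, hφ⟩ <;> refine ⟨t', ht', ?_, fun t'' ht'' => ?_⟩
    · exact (ihψ t' (fun s hs hs' => hagree s (by omega) (by simp [STL.bound] at *; omega))).mp hψ
    · exact (ihφ t'' (fun s hs hs' => hagree s (by omega) (by simp [STL.bound] at *; omega))).mp (hφ t'' ht'')
    · exact (ihψ t' (fun s hs hs' => hagree s (by omega) (by simp [STL.bound] at *; omega))).mpr hψ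
    · exact (ihφ t'' (fun s hs hs' => hagree s (by omega) (by simp [STL.bound] at *; omega))).mpr (hφ t'' ht'')
end
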